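/- arXiv:1405.4981 — 3 statements merged into one kernel-verified Lean document; each statement's English description precedes it below -/
import Mathlib

section
/- For every stochastic encoder Q with hint sets ℳ₁, ℳ₂, Eve's ambiguity is upper-bounded by A_E(Q) ≤ min( min(|ℳ₁|,|ℳ₂|)^ρ · A_B^g(Q), 2^{ρ·H_ᾱ(X|Y)} ). -/
open Real Finset Filter
open scoped Classical

noncomputable section

/-- `G` is a guessing function for `𝒳` given side-information in `W`: for each
side-information value `w`, `x ↦ G x w` is a bijection from `𝒳` onto `{1, …, |𝒳|}`. -/
def IsGuessing {𝒳 W : Type*} [Fintype 𝒳] (G : 𝒳 → W → ℕ) : Prop :=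
  ∀ w : W, (Function.Injective fun x => G x w) ∧
    ∀ x, G x w ∈ Finset.Icc 1 (Fintype.card 𝒳)

/-- `P` is a probability mass function on `𝒳 × 𝒴` (written in curried form). -/
def IsPMF {𝒳 𝒴 : Type*} [Fintype 𝒳] [Fintype 𝒴] (P : 𝒳 → 𝒴 → ℝ) : Prop :=
  (∀ x y, 0 ≤ P x y) ∧ ∑ x, ∑ y, P x y = 1

/-- `Q` is a conditional PMF on `M` given `(x, y)`. -/
def IsCondPMF {𝒳 𝒴 M : Type*} [Fintype M] (Q : 𝒳 → 𝒴 → M → ℝ) : Prop :=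
  ∀ x y, (∀ m, 0 ≤ Q x y m) ∧ ∑ m, Q x y m = 1

/-- Conditional Rényi entropy of order `α` (base-2 logarithms). -/
def condRenyi {𝒳 𝒴 : Type*} [Fintype 𝒳] [Fintype 𝒴] (α : ℝ) (P : 𝒳 → 𝒴 → ℝ) : ℝ :=
  (α / (1 - α)) * Real.logb 2 (∑ y, (∑ x, P x y ^ α) ^ (1 / α))

/-- Bob's guessing ambiguity: the least `ρ`-th guessing moment over guessing
functions for `X` given `(Y, M₁, M₂)`. -/
def bobGuessAmb {𝒳 𝒴 M₁ M₂ : Type*} [Fintype 𝒳] [Fintype 𝒴] [Fintype M₁] [Fintype M₂]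
    (ρ : ℝ) (P : 𝒳 → 𝒴 → ℝ) (Q : 𝒳 → 𝒴 → M₁ × M₂ → ℝ) : ℝ :=
  sInf { e | ∃ G : 𝒳 → 𝒴 × M₁ × M₂ → ℕ, IsGuessing G ∧
    e = ∑ x, ∑ y, ∑ m : M₁ × M₂, P x y * Q x y m * (G x (y, m) : ℝ) ^ ρ }

/-- Eve's ambiguity: the least `ρ`-th moment of the minimum of two guessing
functions, one for `X` given `(Y, M₁)` and one for `X` given `(Y, M₂)`. -/
def eveAmb {𝒳 𝒴 M₁ M₂ : Type*} [Fintype 𝒳] [Fintype 𝒴] [Fintype M₁] [Fintype M₂]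
    (ρ : ℝ) (P : 𝒳 → 𝒴 → ℝ) (Q : 𝒳 → 𝒴 → M₁ × M₂ → ℝ) : ℝ :=
  sInf { e | ∃ G₁ : 𝒳 → 𝒴 × M₁ → ℕ, ∃ G₂ : 𝒳 → 𝒴 × M₂ → ℕ,
    IsGuessing G₁ ∧ IsGuessing G₂ ∧
    e = ∑ x, ∑ y, ∑ m : M₁ × M₂, P x y * Q x y m *
      ((min (G₁ x (y, m.1)) (G₂ x (y, m.2)) : ℕ) : ℝ) ^ ρ }

/-- Bob's list ambiguity: the `ρ`-th moment of the size of the list of all `x`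
with positive posterior probability given `(Y, M₁, M₂)`. -/
def bobListAmb {𝒳 𝒴 M₁ M₂ : Type*} [Fintype 𝒳] [Fintype 𝒴] [Fintype M₁] [Fintype M₂]
    (ρ : ℝ) (P : 𝒳 → 𝒴 → ℝ) (Q : 𝒳 → 𝒴 → M₁ × M₂ → ℝ) : ℝ :=
  ∑ x, ∑ y, ∑ m : M₁ × M₂, P x y * Q x y m *
    ((Finset.univ.filter fun x' => 0 < P x' y * Q x' y m).card : ℝ) ^ ρ

/-! Both bounds come from explicit strategies for Eve. Given Bob's guessing function `G`, Eve
seeing only `m₁` guesses in increasing order of `min_{m₂} G(x | y, m₁, m₂)`; at most `|M₂| t`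
candidates have this minimum `≤ t`, so she needs at most `|M₂|` times as many guesses as Bob, and
symmetrically with `m₂`. Ignoring both hints and guessing in decreasing order of `P(·, y)`, Arikan's
bound `G(x | y) ≤ ∑_{x'} (P(x', y) / P(x, y))^{1/(1+ρ)}` gives the Rényi term. -/

section Guessing

variable {𝒳 : Type*} [Fintype 𝒳]

theorem IsGuessing.comp_right {V W : Type*} {G : 𝒳 → V → ℕ} (hG : IsGuessing G) (e : W → V) :
    IsGuessing fun x w => G x (e w) :=
  fun w => hG (e w)

theorem IsGuessing.card_filter_le {W : Type*} {G : 𝒳 → W → ℕ} (hG : IsGuessing G) (w : W)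
    (t : ℕ) : #{x | G x w ≤ t} ≤ t := by
  simpa using card_le_card_of_injOn (t := Icc 1 t) (fun x => G x w)
    (fun x hx => by
      simp only [coe_filter, Set.mem_ofPred_eq, mem_univ, true_and] at hx
      exact mem_Icc.2 ⟨(mem_Icc.1 ((hG w).2 x)).1, hx⟩)
    (fun a _ b _ hab => (hG w).1 hab)

theorem card_filter_le_lt_card_filter_le {β : Type*} [Preorder β] {k : 𝒳 → β} {a b : 𝒳}
    (h : k a < k b) : #{x | k x ≤ k a} < #{x | k x ≤ k b} := by
  refine card_lt_card <| (ssubset_iff_of_subset fun x hx => ?_).2 ⟨b, by simp, by simp [h.not_ge]⟩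
  simp only [mem_filter, mem_univ, true_and] at hx ⊢
  exact hx.trans h.le

theorem exists_isGuessing_le_card_filter {W β : Type*} [LinearOrder β] (k : W → 𝒳 → β) :
    ∃ G : 𝒳 → W → ℕ, IsGuessing G ∧ ∀ x w, G x w ≤ #{x' | k w x' ≤ k w x} := by
  let key : W → 𝒳 → β ×ₗ Fin (Fintype.card 𝒳) := fun w x => toLex (k w x, Fintype.equivFin 𝒳 x)
  have key_injective (w : W) : Function.Injective (key w) := fun a b h =>
    (Fintype.equivFin 𝒳).injective (congrArg (fun p => (ofLex p).2) h)
  refine ⟨fun x w => #{x' | key w x' ≤ key w x}, fun w => ⟨fun a b hab => ?_, fun x => ?_⟩,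
    fun x w => card_le_card fun x' hx' => ?_⟩
  · by_contra hne
    rcases ((key_injective w).ne hne).lt_or_gt with h | h
    · exact (card_filter_le_lt_card_filter_le h).ne (by convert hab)
    · exact (card_filter_le_lt_card_filter_le h).ne' (by convert hab)
  · exact mem_Icc.2 ⟨card_pos.2 ⟨x, by simp⟩, (card_filter_le _ _).trans_eq card_univ⟩
  · simp only [mem_filter, mem_univ, true_and] at hx' ⊢
    exact Prod.Lex.monotone_fst _ _ hx'

theorem IsGuessing.exists_le_card_mul {W M : Type*} [Fintype M] [Nonempty M]
    {G : 𝒳 → W × M → ℕ} (hG : IsGuessing G) :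
    ∃ G' : 𝒳 → W → ℕ, IsGuessing G' ∧ ∀ x w m, G' x w ≤ Fintype.card M * G x (w, m) := by
  let f : W → 𝒳 → ℕ := fun w x => univ.inf' univ_nonempty fun m => G x (w, m)
  obtain ⟨G', hG', hG'_le⟩ := exists_isGuessing_le_card_filter f
  refine ⟨G', hG', fun x w m => ?_⟩
  have hcover : ({x' | f w x' ≤ f w x} : Finset 𝒳) ⊆
      univ.biUnion fun m' => {x' | G x' (w, m') ≤ f w x} := fun x' hx' => by
    obtain ⟨m', -, hm'⟩ := (inf'_le_iff _).1 (mem_filter.1 hx').2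
    exact mem_biUnion.2 ⟨m', mem_univ _, mem_filter.2 ⟨mem_univ _, hm'⟩⟩
  calc G' x w ≤ #{x' | f w x' ≤ f w x} := hG'_le x w
    _ ≤ ∑ m', #{x' | G x' (w, m') ≤ f w x} := (card_le_card hcover).trans card_biUnion_le
    _ ≤ ∑ _m' : M, f w x := sum_le_sum fun m' _ => hG.card_filter_le _ _
    _ = Fintype.card M * f w x := by rw [sum_const, card_univ, smul_eq_mul]
    _ ≤ Fintype.card M * G x (w, m) := Nat.mul_le_mul_left _ (inf'_le _ (mem_univ m))

end Guessing

section Ambiguity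

variable {𝒳 𝒴 M : Type*} [Fintype 𝒳] [Fintype 𝒴] [Fintype M]

/-- The `ρ`-th moment `E[g(X, Y, M)^ρ]` under `P(x, y) Q(m | x, y)`; both ambiguities are infima
of such moments. -/
def guessMoment (ρ : ℝ) (P : 𝒳 → 𝒴 → ℝ) (Q : 𝒳 → 𝒴 → M → ℝ) (g : 𝒳 → 𝒴 → M → ℕ) : ℝ :=
  ∑ x, ∑ y, ∑ m, P x y * Q x y m * (g x y m : ℝ) ^ ρ

variable {ρ : ℝ} {P : 𝒳 → 𝒴 → ℝ} {Q : 𝒳 → 𝒴 → M → ℝ}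

theorem guessMoment_nonneg (hP : ∀ x y, 0 ≤ P x y) (hQ : IsCondPMF Q) (g : 𝒳 → 𝒴 → M → ℕ) :
    0 ≤ guessMoment ρ P Q g :=
  sum_nonneg fun x _ => sum_nonneg fun y _ => sum_nonneg fun m _ =>
    mul_nonneg (mul_nonneg (hP x y) ((hQ x y).1 m)) (by positivity)

theorem guessMoment_le_mul (hρ : 0 ≤ ρ) (hP : ∀ x y, 0 ≤ P x y) (hQ : IsCondPMF Q)
    {g g' : 𝒳 → 𝒴 → M → ℕ} {c : ℕ} (h : ∀ x y m, g x y m ≤ c * g' x y m) :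
    guessMoment ρ P Q g ≤ (c : ℝ) ^ ρ * guessMoment ρ P Q g' := by
  simp only [guessMoment, mul_sum]
  refine sum_le_sum fun x _ => sum_le_sum fun y _ => sum_le_sum fun m _ => ?_
  calc P x y * Q x y m * ((g x y m : ℕ) : ℝ) ^ ρ
      ≤ P x y * Q x y m * ((c : ℝ) * g' x y m) ^ ρ := by
        gcongr
        · exact mul_nonneg (hP x y) ((hQ x y).1 m)
        · exact_mod_cast h x y m
    _ = (c : ℝ) ^ ρ * (P x y * Q x y m * (g' x y m : ℝ) ^ ρ) := by
        rw [Real.mul_rpow (by positivity) (by positivity)]; ring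

theorem guessMoment_hint_free (hQ : IsCondPMF Q) (g : 𝒳 → 𝒴 → ℕ) :
    guessMoment ρ P Q (fun x y _ => g x y) = ∑ x, ∑ y, P x y * (g x y : ℝ) ^ ρ := by
  refine sum_congr rfl fun x _ => sum_congr rfl fun y _ => ?_
  rw [← sum_mul, ← mul_sum, (hQ x y).2, mul_one]

variable {M₁ M₂ : Type*} [Fintype M₁] [Fintype M₂] {Q : 𝒳 → 𝒴 → M₁ × M₂ → ℝ}

theorem eveAmb_le_guessMoment (hP : ∀ x y, 0 ≤ P x y) (hQ : IsCondPMF Q)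
    {G₁ : 𝒳 → 𝒴 × M₁ → ℕ} {G₂ : 𝒳 → 𝒴 × M₂ → ℕ} (hG₁ : IsGuessing G₁) (hG₂ : IsGuessing G₂) :
    eveAmb ρ P Q ≤ guessMoment ρ P Q fun x y m => min (G₁ x (y, m.1)) (G₂ x (y, m.2)) :=
  csInf_le ⟨0, by rintro _ ⟨G₁, G₂, -, -, rfl⟩; exact guessMoment_nonneg hP hQ _⟩
    ⟨G₁, G₂, hG₁, hG₂, rfl⟩

theorem eveAmb_le_mul_bobGuessAmb [Nonempty M₁] [Nonempty M₂] (hρ : 0 ≤ ρ)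
    (hP : ∀ x y, 0 ≤ P x y) (hQ : IsCondPMF Q) :
    eveAmb ρ P Q ≤
      ((min (Fintype.card M₁) (Fintype.card M₂) : ℕ) : ℝ) ^ ρ * bobGuessAmb ρ P Q := by
  set c := min (Fintype.card M₁) (Fintype.card M₂)
  have hc : (0 : ℝ) < (c : ℝ) ^ ρ := by
    have : 0 < c := lt_min Fintype.card_pos Fintype.card_pos
    positivity
  obtain ⟨G₀, hG₀, -⟩ := exists_isGuessing_le_card_filter (W := 𝒴 × M₁ × M₂) fun _ (_ : 𝒳) => 0
  rw [← div_le_iff₀' hc]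
  refine le_csInf ⟨_, G₀, hG₀, rfl⟩ ?_
  rintro _ ⟨G, hG, rfl⟩
  rw [div_le_iff₀' hc]
  obtain ⟨G₁, hG₁, hG₁_le⟩ :=
    (hG.comp_right fun w : (𝒴 × M₁) × M₂ => (w.1.1, w.1.2, w.2)).exists_le_card_mul
  obtain ⟨G₂, hG₂, hG₂_le⟩ :=
    (hG.comp_right fun w : (𝒴 × M₂) × M₁ => (w.1.1, w.2, w.1.2)).exists_le_card_mul
  refine (eveAmb_le_guessMoment hP hQ hG₁ hG₂).trans
    (guessMoment_le_mul (g' := fun x y m => G x (y, m)) hρ hP hQ fun x y m => ?_)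
  calc min (G₁ x (y, m.1)) (G₂ x (y, m.2))
      ≤ min (Fintype.card M₂ * G x (y, m)) (Fintype.card M₁ * G x (y, m)) :=
        min_le_min (hG₁_le x (y, m.1) m.2) (hG₂_le x (y, m.2) m.1)
    _ = c * G x (y, m) := by rw [min_comm, min_mul_mul_right]

end Ambiguity

section Renyi

variable {𝒳 : Type*} [Fintype 𝒳]

theorem card_filter_le_mul_rpow_le_sum {p : 𝒳 → ℝ} (hp : ∀ x, 0 ≤ p x) {α : ℝ} (hα : 0 ≤ α)
    (x : 𝒳) : (#{x' | p x ≤ p x'} : ℝ) * p x ^ α ≤ ∑ x', p x' ^ α :=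
  calc (#{x' | p x ≤ p x'} : ℝ) * p x ^ α = ∑ _x' ∈ {x' | p x ≤ p x'}, p x ^ α := by
        rw [sum_const, nsmul_eq_mul]
    _ ≤ ∑ x' ∈ {x' | p x ≤ p x'}, p x' ^ α :=
        sum_le_sum fun x' hx' => Real.rpow_le_rpow (hp x) (mem_filter.1 hx').2 hα
    _ ≤ ∑ x', p x' ^ α :=
        sum_le_sum_of_subset_of_nonneg (subset_univ _) fun x' _ _ => Real.rpow_nonneg (hp x') α

/-- Arikan's bound; it rests on `a = a^α (a^α)^ρ` for `α = 1 / (1 + ρ)`. -/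
theorem mul_rpow_le_rpow_mul_rpow {a n T ρ : ℝ} (ha : 0 ≤ a) (hn : 0 ≤ n) (hρ : 0 ≤ ρ)
    (h : n * a ^ (1 / (1 + ρ)) ≤ T) : a * n ^ ρ ≤ a ^ (1 / (1 + ρ)) * T ^ ρ := by
  have hsplit : a = a ^ (1 / (1 + ρ)) * (a ^ (1 / (1 + ρ))) ^ ρ := by
    rw [← Real.rpow_one_add' (by positivity) (by positivity), ← Real.rpow_mul ha,
      one_div_mul_cancel (by positivity), Real.rpow_one]
  calc a * n ^ ρ = a ^ (1 / (1 + ρ)) * (n * a ^ (1 / (1 + ρ))) ^ ρ := by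
        rw [Real.mul_rpow hn (by positivity)]
        nth_rw 1 [hsplit]
        ring
    _ ≤ a ^ (1 / (1 + ρ)) * T ^ ρ := by gcongr

variable {𝒴 : Type*} [Fintype 𝒴] {ρ : ℝ} {P : 𝒳 → 𝒴 → ℝ}

/-- Equality unless the sum vanishes, where `logb 2 0 = 0`. -/
theorem sum_rpow_le_two_rpow_mul_condRenyi (hρ : 0 < ρ) (hP : ∀ x y, 0 ≤ P x y) :
    ∑ y, (∑ x, P x y ^ (1 / (1 + ρ))) ^ (1 + ρ) ≤ 2 ^ (ρ * condRenyi (1 / (1 + ρ)) P) := by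
  have hexp : ρ * (1 / (1 + ρ) / (1 - 1 / (1 + ρ))) = 1 := by
    field_simp
    rw [add_sub_cancel_left, div_self hρ.ne']
  rw [condRenyi, one_div_one_div, ← mul_assoc, hexp, one_mul]
  have hS : 0 ≤ ∑ y, (∑ x, P x y ^ (1 / (1 + ρ))) ^ (1 + ρ) :=
    sum_nonneg fun y _ => Real.rpow_nonneg (sum_nonneg fun x _ => Real.rpow_nonneg (hP x y) _) _
  rcases hS.eq_or_lt with h | h
  · rw [← h]
    positivity
  · rw [Real.rpow_logb (by norm_num) (by norm_num) h]

variable {M₁ M₂ : Type*} [Fintype M₁] [Fintype M₂] {Q : 𝒳 → 𝒴 → M₁ × M₂ → ℝ}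

theorem eveAmb_le_two_rpow_mul_condRenyi (hρ : 0 < ρ) (hP : ∀ x y, 0 ≤ P x y)
    (hQ : IsCondPMF Q) : eveAmb ρ P Q ≤ 2 ^ (ρ * condRenyi (1 / (1 + ρ)) P) := by
  obtain ⟨G, hG, hG_le⟩ := exists_isGuessing_le_card_filter fun y x => OrderDual.toDual (P x y)
  simp only [OrderDual.toDual_le_toDual] at hG_le
  calc eveAmb ρ P Q
      ≤ guessMoment ρ P Q fun x y _ => min (G x y) (G x y) :=
        eveAmb_le_guessMoment (G₁ := fun x w => G x w.1) (G₂ := fun x w => G x w.1) hP hQ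
          (hG.comp_right Prod.fst) (hG.comp_right Prod.fst)
    _ = ∑ x, ∑ y, P x y * (G x y : ℝ) ^ ρ := by
        simp only [min_self]
        exact guessMoment_hint_free hQ G
    _ ≤ ∑ x, ∑ y, P x y ^ (1 / (1 + ρ)) * (∑ x', P x' y ^ (1 / (1 + ρ))) ^ ρ := by
        refine sum_le_sum fun x _ => sum_le_sum fun y _ => ?_
        refine mul_rpow_le_rpow_mul_rpow (hP x y) (Nat.cast_nonneg _) hρ.le
          (le_trans ?_ (card_filter_le_mul_rpow_le_sum (hP · y) (by positivity) x))
        exact mul_le_mul_of_nonneg_right (by exact_mod_cast hG_le x y)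
          (Real.rpow_nonneg (hP x y) _)
    _ = ∑ y, (∑ x, P x y ^ (1 / (1 + ρ))) ^ (1 + ρ) := by
        rw [sum_comm]
        refine sum_congr rfl fun y _ => ?_
        rw [← sum_mul, Real.rpow_one_add' (sum_nonneg fun x _ => Real.rpow_nonneg (hP x y) _)
          (by positivity)]
    _ ≤ 2 ^ (ρ * condRenyi (1 / (1 + ρ)) P) := sum_rpow_le_two_rpow_mul_condRenyi hρ hP

end Renyi

theorem finite_blocklength_guessing_converse_eve_general
    {𝒳 𝒴 M₁ M₂ : Type*} [Fintype 𝒳] [Fintype 𝒴] [Fintype M₁] [Fintype M₂]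
    [Nonempty M₁] [Nonempty M₂]
    (ρ : ℝ) (hρ : 0 < ρ) (P : 𝒳 → 𝒴 → ℝ) (hP : IsPMF P)
    (Q : 𝒳 → 𝒴 → M₁ × M₂ → ℝ) (hQ : IsCondPMF Q) :
    eveAmb ρ P Q ≤
      min ((min (Fintype.card M₁) (Fintype.card M₂) : ℝ) ^ ρ * bobGuessAmb ρ P Q)
        (2 ^ (ρ * condRenyi (1 / (1 + ρ)) P)) := by
  refine le_min ?_ (eveAmb_le_two_rpow_mul_condRenyi hρ hP.1 hQ)
  simpa using eveAmb_le_mul_bobGuessAmb hρ.le hP.1 hQ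

theorem finite_blocklength_guessing_converse_eve
    {𝒳 𝒴 M₁ M₂ : Type*} [Fintype 𝒳] [Fintype 𝒴] [Fintype M₁] [Fintype M₂]
    [Nonempty 𝒳] [Nonempty 𝒴] [Nonempty M₁] [Nonempty M₂]
    (ρ : ℝ) (hρ : 0 < ρ) (P : 𝒳 → 𝒴 → ℝ) (hP : IsPMF P)
    (Q : 𝒳 → 𝒴 → M₁ × M₂ → ℝ) (hQ : IsCondPMF Q) :
    eveAmb ρ P Q ≤
      min ((min (Fintype.card M₁) (Fintype.card M₂) : ℝ) ^ ρ * bobGuessAmb ρ P Q)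
        (2 ^ (ρ * condRenyi (1 / (1 + ρ)) P)) :=
  finite_blocklength_guessing_converse_eve_general ρ hρ P hP Q hQ
end
end

section
/- For every stochastic encoder Q with hint sets ℳ₁, ℳ₂, Bob's list ambiguity is lower-bounded by A_B^l(Q) ≥ max( 2^{ρ(H_ᾱ(X|Y) − log(|ℳ₁|·|ℳ₂|))}, 1 ). -/
/-!
Write `α = 1/(1+ρ)`. For fixed `(y, m)`, Hölder's inequality on the list `L` of `x` with
`P(x,y) Q(m|x,y) > 0` gives `(∑ₓ (P Q)^α)^(1+ρ) ≤ |L|^ρ ∑ₓ P Q`. Since `Q ≤ 1` implies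
`Q^α ≥ Q`, summing over the hints gives `∑ₘ ∑ₓ (P Q)^α ≥ ∑ₓ P^α`, and the power-mean
inequality over the `|ℳ₁||ℳ₂|` hints costs a factor `(|ℳ₁||ℳ₂|)^ρ`. Summing over `y` yields
`∑_y (∑ₓ P(x,y)^α)^(1+ρ) ≤ (|ℳ₁||ℳ₂|)^ρ A_B^l(Q)`, whose left side is `2^(ρ H_α(X|Y))`.
The bound `1` holds because the list always contains the true `x`.
-/

open Real Finset Filter
open scoped Classical

noncomputable section

section RpowSums

variable {ι : Type*} [Fintype ι]

lemma sum_rpow_inv_rpow_le_card_pos_rpow_mul_sum {a : ι → ℝ} (ha : ∀ i, 0 ≤ a i)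
    {p : ℝ} (hp : 1 ≤ p) :
    (∑ i, a i ^ p⁻¹) ^ p ≤ (#{i | 0 < a i} : ℝ) ^ (p - 1) * ∑ i, a i := by
  have hp0 : p ≠ 0 := by positivity
  have h_supp : ∀ i ∈ (univ : Finset ι), a i ^ p⁻¹ ≠ 0 → 0 < a i := fun i _ hi =>
    (ha i).lt_of_ne' fun h0 => hi (by rw [h0, zero_rpow (inv_ne_zero hp0)])
  rw [← sum_filter_of_ne h_supp,
    ← sum_filter_of_ne fun i _ (hi : a i ≠ 0) => (ha i).lt_of_ne' hi]
  calc (∑ i with 0 < a i, a i ^ p⁻¹) ^ p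
      ≤ (#{i | 0 < a i} : ℝ) ^ (p - 1) * ∑ i with 0 < a i, (a i ^ p⁻¹) ^ p :=
        rpow_sum_le_const_mul_sum_rpow_of_nonneg _ hp fun i _ => rpow_nonneg (ha i) _
    _ = (#{i | 0 < a i} : ℝ) ^ (p - 1) * ∑ i with 0 < a i, a i := by
        simp only [rpow_inv_rpow (ha _) hp0]

lemma one_le_sum_rpow_of_sum_eq_one {q : ι → ℝ} (hq : ∀ i, 0 ≤ q i) (hq1 : ∑ i, q i = 1)
    {α : ℝ} (hα : α ≤ 1) : 1 ≤ ∑ i, q i ^ α := by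
  have hq_le : ∀ i, q i ≤ 1 := fun i =>
    hq1 ▸ single_le_sum (fun j _ => hq j) (mem_univ i)
  exact hq1 ▸ sum_le_sum fun i _ => self_le_rpow_of_le_one (hq i) (hq_le i) hα

end RpowSums

section Encoder

variable {𝒳 𝒴 M : Type*} [Fintype 𝒳] [Fintype M]
  {P : 𝒳 → 𝒴 → ℝ} {Q : 𝒳 → 𝒴 → M → ℝ} {ρ : ℝ}

lemma sum_rpow_le_card_rpow_mul_sum_sum_mul_rpow (hP : ∀ x y, 0 ≤ P x y) (hQ : IsCondPMF Q)
    (hρ : 0 ≤ ρ) (y : 𝒴) :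
    (∑ x, P x y ^ (1 + ρ)⁻¹) ^ (1 + ρ) ≤
      (Fintype.card M : ℝ) ^ ρ * ∑ m, (∑ x, (P x y * Q x y m) ^ (1 + ρ)⁻¹) ^ (1 + ρ) := by
  have hα : (1 + ρ)⁻¹ ≤ 1 := inv_le_one_of_one_le₀ (by linarith)
  have h_le : ∑ x, P x y ^ (1 + ρ)⁻¹ ≤ ∑ m, ∑ x, (P x y * Q x y m) ^ (1 + ρ)⁻¹ := by
    simp only [mul_rpow (hP _ y) ((hQ _ y).1 _)]
    rw [sum_comm]
    simp only [← mul_sum]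
    exact sum_le_sum fun x _ => le_mul_of_one_le_right (rpow_nonneg (hP x y) _)
      (one_le_sum_rpow_of_sum_eq_one (hQ x y).1 (hQ x y).2 hα)
  calc (∑ x, P x y ^ (1 + ρ)⁻¹) ^ (1 + ρ)
      ≤ (∑ m, ∑ x, (P x y * Q x y m) ^ (1 + ρ)⁻¹) ^ (1 + ρ) :=
        rpow_le_rpow (sum_nonneg fun x _ => rpow_nonneg (hP x y) _) h_le (by linarith)
    _ ≤ (Fintype.card M : ℝ) ^ (1 + ρ - 1) *
          ∑ m, (∑ x, (P x y * Q x y m) ^ (1 + ρ)⁻¹) ^ (1 + ρ) :=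
        rpow_sum_le_const_mul_sum_rpow_of_nonneg _ (by linarith) fun m _ =>
          sum_nonneg fun x _ => rpow_nonneg (mul_nonneg (hP x y) ((hQ x y).1 m)) _
    _ = _ := by rw [add_sub_cancel_left]

variable [Fintype 𝒴]

lemma IsPMF.exists_pos (hP : IsPMF P) : ∃ x y, 0 < P x y := by
  by_contra! h
  have h_zero : ∑ x, ∑ y, P x y = 0 :=
    sum_eq_zero fun x _ => sum_eq_zero fun y _ => (h x y).antisymm (hP.1 x y)
  exact one_ne_zero (hP.2.symm.trans h_zero)

lemma IsPMF.sum_sum_sum_mul_eq_one (hP : IsPMF P) (hQ : IsCondPMF Q) :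
    ∑ x, ∑ y, ∑ m, P x y * Q x y m = 1 := by
  simp only [← mul_sum, (hQ _ _).2, mul_one, hP.2]

lemma bobListAmb_eq_sum_sum_mul_card_rpow {M₁ M₂ : Type*} [Fintype M₁] [Fintype M₂]
    (P : 𝒳 → 𝒴 → ℝ) (Q : 𝒳 → 𝒴 → M₁ × M₂ → ℝ) :
    bobListAmb ρ P Q =
      ∑ y, ∑ m, (∑ x, P x y * Q x y m) * (#{x | 0 < P x y * Q x y m} : ℝ) ^ ρ := by
  rw [bobListAmb, sum_comm]
  refine sum_congr rfl fun y _ => ?_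
  rw [sum_comm]
  simp only [sum_mul]

lemma one_le_bobListAmb {M₁ M₂ : Type*} [Fintype M₁] [Fintype M₂]
    {Q : 𝒳 → 𝒴 → M₁ × M₂ → ℝ} (hρ : 0 ≤ ρ) (hP : IsPMF P) (hQ : IsCondPMF Q) :
    1 ≤ bobListAmb ρ P Q := by
  rw [← hP.sum_sum_sum_mul_eq_one hQ, bobListAmb]
  refine sum_le_sum fun x _ => sum_le_sum fun y _ => sum_le_sum fun m _ => ?_
  rcases (mul_nonneg (hP.1 x y) ((hQ x y).1 m)).eq_or_lt with h_zero | h_pos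
  · simp [← h_zero]
  · have h_card : (1 : ℝ) ≤ #{x' | 0 < P x' y * Q x' y m} := by
      exact_mod_cast card_pos.mpr ⟨x, by simpa using h_pos⟩
    exact le_mul_of_one_le_right h_pos.le (one_le_rpow h_card hρ)

lemma sum_rpow_le_card_rpow_mul_bobListAmb {M₁ M₂ : Type*} [Fintype M₁]
    [Fintype M₂] {Q : 𝒳 → 𝒴 → M₁ × M₂ → ℝ} (hρ : 0 ≤ ρ) (hP : ∀ x y, 0 ≤ P x y)
    (hQ : IsCondPMF Q) :
    ∑ y, (∑ x, P x y ^ (1 + ρ)⁻¹) ^ (1 + ρ) ≤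
      ((Fintype.card M₁ : ℝ) * Fintype.card M₂) ^ ρ * bobListAmb ρ P Q := by
  rw [bobListAmb_eq_sum_sum_mul_card_rpow, mul_sum]
  refine sum_le_sum fun y _ => (sum_rpow_le_card_rpow_mul_sum_sum_mul_rpow hP hQ hρ y).trans ?_
  rw [Fintype.card_prod, Nat.cast_mul]
  gcongr with m
  have h_list := sum_rpow_inv_rpow_le_card_pos_rpow_mul_sum
    (fun x => mul_nonneg (hP x y) ((hQ x y).1 m)) (p := 1 + ρ) (by linarith)
  rwa [add_sub_cancel_left, mul_comm] at h_list

lemma two_rpow_mul_condRenyi (hP : IsPMF P) (hρ : 0 < ρ) :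
    (2 : ℝ) ^ (ρ * condRenyi (1 / (1 + ρ)) P) = ∑ y, (∑ x, P x y ^ (1 + ρ)⁻¹) ^ (1 + ρ) := by
  obtain ⟨x₀, y₀, hx₀⟩ := hP.exists_pos
  have h_inner : ∀ y, 0 ≤ ∑ x, P x y ^ (1 + ρ)⁻¹ := fun y =>
    sum_nonneg fun x _ => rpow_nonneg (hP.1 x y) _
  have h_pos : 0 < ∑ y, (∑ x, P x y ^ (1 + ρ)⁻¹) ^ (1 + ρ) :=
    sum_pos' (fun y _ => rpow_nonneg (h_inner y) _) ⟨y₀, mem_univ _, rpow_pos_of_pos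
      (sum_pos' (fun x _ => rpow_nonneg (hP.1 x y₀) _) ⟨x₀, mem_univ _, rpow_pos_of_pos hx₀ _⟩) _⟩
  have h_coeff : ρ * ((1 / (1 + ρ)) / (1 - 1 / (1 + ρ))) = 1 := by
    rw [one_sub_div (by positivity), div_div_div_cancel_right₀ (by positivity),
      add_sub_cancel_left, mul_one_div_cancel hρ.ne']
  rw [condRenyi, ← mul_assoc, h_coeff, one_mul, one_div_one_div, one_div,
    rpow_logb two_pos (by norm_num) h_pos]

end Encoder

theorem finite_blocklength_list_converse_bob_general
    {𝒳 𝒴 M₁ M₂ : Type*} [Fintype 𝒳] [Fintype 𝒴] [Fintype M₁] [Fintype M₂]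
    [Nonempty M₁] [Nonempty M₂]
    (ρ : ℝ) (hρ : 0 < ρ) (P : 𝒳 → 𝒴 → ℝ) (hP : IsPMF P)
    (Q : 𝒳 → 𝒴 → M₁ × M₂ → ℝ) (hQ : IsCondPMF Q) :
    max (2 ^ (ρ * (condRenyi (1 / (1 + ρ)) P
        - Real.logb 2 ((Fintype.card M₁ : ℝ) * Fintype.card M₂)))) 1 ≤
      bobListAmb ρ P Q := by
  refine max_le ?_ (one_le_bobListAmb hρ.le hP hQ)
  set K : ℝ := (Fintype.card M₁ : ℝ) * Fintype.card M₂
  have hK : 0 < K := by positivity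
  have h_card : (2 : ℝ) ^ (ρ * logb 2 K) = K ^ ρ := by
    rw [mul_comm, rpow_mul zero_le_two, rpow_logb two_pos (by norm_num) hK]
  rw [mul_sub, rpow_sub two_pos, two_rpow_mul_condRenyi hP hρ, h_card,
    div_le_iff₀' (by positivity)]
  exact sum_rpow_le_card_rpow_mul_bobListAmb hρ.le hP.1 hQ

theorem finite_blocklength_list_converse_bob
    {𝒳 𝒴 M₁ M₂ : Type*} [Fintype 𝒳] [Fintype 𝒴] [Fintype M₁] [Fintype M₂]
    [Nonempty 𝒳] [Nonempty 𝒴] [Nonempty M₁] [Nonempty M₂]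
    (ρ : ℝ) (hρ : 0 < ρ) (P : 𝒳 → 𝒴 → ℝ) (hP : IsPMF P)
    (Q : 𝒳 → 𝒴 → M₁ × M₂ → ℝ) (hQ : IsCondPMF Q) :
    max (2 ^ (ρ * (condRenyi (1 / (1 + ρ)) P
        - Real.logb 2 ((Fintype.card M₁ : ℝ) * Fintype.card M₂)))) 1 ≤
      bobListAmb ρ P Q :=
  finite_blocklength_list_converse_bob_general ρ hρ P hP Q hQ
end
end

section
/- (Asymptotic infeasibility.) Suppose the conditional Rényi entropy-rate H := lim_{n→∞} H_ᾱ(X^n|Y^n)/n exists and let R₁, R₂ > 0 satisfy R₁ + R₂ < H. Then for every sequence (Q_n) of stochastic encoders, where Q_n has hint sets ℳ₁⁽ⁿ⁾ of size ⌈2^{nR₁}⌉ and ℳ₂⁽ⁿ⁾ of size ⌈2^{nR₂}⌉, Bob's guessing ambiguity cannot tend to 1: in fact liminf_{n→∞} (1/n) log A_B^g(Q_n) ≥ ρ(H − R₁ − R₂) > 0. -/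
open Real Finset Filter
open scoped Classical

noncomputable section

/-
Arikan's Hölder argument bounds every guessing moment from below: for a guessing function `G`
of `X` given `W`, `E[G ^ ρ] ≥ (1 + ln |𝒳|) ^ (-ρ) · 2 ^ (ρ H_{1/(1+ρ)}(X | W))`, and a hint `M`
lowers this conditional Rényi entropy by at most `log |M|`. Over `𝒳ⁿ` with hints of rates `R₁`,
`R₂` this gives `(1/n) log A_B ≥ ρ (H_ᾱ(Xⁿ | Yⁿ) / n - R₁ - R₂) - O(log n / n)`, while an
ambiguity tending to `1` would make the left side tend to `0`.
-/

open Topology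

theorem harmonic_nonneg (n : ℕ) : 0 ≤ harmonic n :=
  sum_nonneg fun _ _ => by positivity

namespace IsGuessing

variable {𝒳 W : Type*} [Fintype 𝒳] {G : 𝒳 → W → ℕ}

theorem equivFin (W : Type*) :
    IsGuessing fun (x : 𝒳) (_ : W) => (Fintype.equivFin 𝒳 x : ℕ) + 1 :=
  fun _ => ⟨fun _ _ h => (Fintype.equivFin 𝒳).injective (Fin.val_injective (by simpa using h)),
    fun x => Finset.mem_Icc.2 ⟨Nat.le_add_left 1 _, (Fintype.equivFin 𝒳 x).isLt⟩⟩

theorem pos (hG : IsGuessing G) (x : 𝒳) (w : W) : 0 < G x w :=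
  (Finset.mem_Icc.1 ((hG w).2 x)).1

theorem le_card (hG : IsGuessing G) (x : 𝒳) (w : W) : G x w ≤ Fintype.card 𝒳 :=
  (Finset.mem_Icc.1 ((hG w).2 x)).2

theorem sum_inv_eq_harmonic (hG : IsGuessing G) (w : W) :
    ∑ x, ((G x w : ℝ))⁻¹ = harmonic (Fintype.card 𝒳) := by
  have himage : univ.image (G · w) = Icc 1 (Fintype.card 𝒳) :=
    eq_of_subset_of_card_le (by simpa [Finset.subset_iff] using (hG w).2)
      (by simp [card_image_of_injective _ (hG w).1])
  rw [harmonic_eq_sum_Icc, ← himage, sum_image fun x _ y _ h => (hG w).1 h]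
  push_cast
  rfl

/-- Arikan's inequality: Hölder's inequality with weights `1 / G`, whose total is harmonic. -/
theorem rpow_sum_rpow_le {ρ : ℝ} (hρ : 0 ≤ ρ) {p : 𝒳 → ℝ} (hp : ∀ x, 0 ≤ p x)
    (hG : IsGuessing G) (w : W) :
    (∑ x, p x ^ (1 / (1 + ρ))) ^ (1 + ρ) ≤
      (harmonic (Fintype.card 𝒳) : ℝ) ^ ρ * ∑ x, p x * (G x w : ℝ) ^ ρ := by
  have hρ1 : 0 < 1 + ρ := by linarith
  have hg x : (0 : ℝ) < G x w := mod_cast hG.pos x w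
  have hholder := Real.inner_le_weight_mul_Lp_of_nonneg univ (le_add_of_nonneg_right hρ)
    (fun x => ((G x w : ℝ))⁻¹) (fun x => p x ^ (1 / (1 + ρ)) * G x w)
    (fun x => (inv_pos.2 (hg x)).le) (fun x => mul_nonneg (rpow_nonneg (hp x) _) (hg x).le)
  have hwf x : ((G x w : ℝ))⁻¹ * (p x ^ (1 / (1 + ρ)) * G x w) = p x ^ (1 / (1 + ρ)) := by
    field_simp [(hg x).ne']
  have hwfp x : ((G x w : ℝ))⁻¹ * (p x ^ (1 / (1 + ρ)) * G x w) ^ (1 + ρ) =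
      p x * (G x w : ℝ) ^ ρ := by
    rw [mul_rpow (rpow_nonneg (hp x) _) (hg x).le, ← rpow_mul (hp x),
      one_div_mul_cancel hρ1.ne', rpow_one, rpow_add (hg x), rpow_one]
    field_simp [(hg x).ne']
  simp only [hwf, hwfp, hG.sum_inv_eq_harmonic] at hholder
  have hc : (0 : ℝ) ≤ harmonic (Fintype.card 𝒳) := mod_cast harmonic_nonneg _
  have hT : 0 ≤ ∑ x, p x * (G x w : ℝ) ^ ρ :=
    sum_nonneg fun x _ => mul_nonneg (hp x) (rpow_nonneg (hg x).le _)
  calc (∑ x, p x ^ (1 / (1 + ρ))) ^ (1 + ρ)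
      ≤ ((harmonic (Fintype.card 𝒳) : ℝ) ^ (1 - (1 + ρ)⁻¹) *
          (∑ x, p x * (G x w : ℝ) ^ ρ) ^ (1 + ρ)⁻¹) ^ (1 + ρ) :=
        rpow_le_rpow (sum_nonneg fun x _ => rpow_nonneg (hp x) _) hholder hρ1.le
    _ = (harmonic (Fintype.card 𝒳) : ℝ) ^ ρ * ∑ x, p x * (G x w : ℝ) ^ ρ := by
        rw [mul_rpow (rpow_nonneg hc _) (rpow_nonneg hT _), ← rpow_mul hc, ← rpow_mul hT,
          inv_mul_cancel₀ hρ1.ne', rpow_one, sub_mul, one_mul, inv_mul_cancel₀ hρ1.ne',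
          add_sub_cancel_left]

end IsGuessing

/-- Splitting by the hint can only increase the inner sum, as `q ≤ q ^ (1 / (1 + ρ))` on
`[0, 1]`; the power-mean inequality then costs the factor `|M| ^ ρ`. -/
theorem rpow_sum_rpow_le_card_rpow_mul_sum {𝒳 M : Type*} [Fintype 𝒳] [Fintype M] {ρ : ℝ}
    (hρ : 0 ≤ ρ) {p : 𝒳 → ℝ} (hp : ∀ x, 0 ≤ p x) {q : 𝒳 → M → ℝ}
    (hq₀ : ∀ x m, 0 ≤ q x m) (hq₁ : ∀ x, ∑ m, q x m = 1) :
    (∑ x, p x ^ (1 / (1 + ρ))) ^ (1 + ρ) ≤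
      (Fintype.card M : ℝ) ^ ρ * ∑ m, (∑ x, (p x * q x m) ^ (1 / (1 + ρ))) ^ (1 + ρ) := by
  have hα : 1 / (1 + ρ) ≤ 1 := (div_le_one (by linarith)).2 (by linarith)
  have hsplit : ∑ x, p x ^ (1 / (1 + ρ)) ≤ ∑ m, ∑ x, (p x * q x m) ^ (1 / (1 + ρ)) := by
    rw [sum_comm]
    refine sum_le_sum fun x _ => ?_
    have hq_le m : q x m ≤ 1 :=
      hq₁ x ▸ single_le_sum (fun m _ => hq₀ x m) (mem_univ m)
    calc p x ^ (1 / (1 + ρ)) = p x ^ (1 / (1 + ρ)) * ∑ m, q x m := by rw [hq₁, mul_one]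
      _ ≤ p x ^ (1 / (1 + ρ)) * ∑ m, q x m ^ (1 / (1 + ρ)) :=
        mul_le_mul_of_nonneg_left
          (sum_le_sum fun m _ => self_le_rpow_of_le_one (hq₀ x m) (hq_le m) hα)
          (rpow_nonneg (hp x) _)
      _ = ∑ m, (p x * q x m) ^ (1 / (1 + ρ)) := by
        rw [mul_sum]
        exact sum_congr rfl fun m _ => (mul_rpow (hp x) (hq₀ x m)).symm
  calc (∑ x, p x ^ (1 / (1 + ρ))) ^ (1 + ρ)
      ≤ (∑ m, ∑ x, (p x * q x m) ^ (1 / (1 + ρ))) ^ (1 + ρ) :=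
        rpow_le_rpow (sum_nonneg fun x _ => rpow_nonneg (hp x) _) hsplit (by linarith)
    _ ≤ _ := by
        simpa using rpow_sum_le_const_mul_sum_rpow_of_nonneg univ (le_add_of_nonneg_right hρ)
          fun m _ => sum_nonneg fun x _ => rpow_nonneg (mul_nonneg (hp x) (hq₀ x m)) _

section GuessingMoment

variable {𝒳 𝒴 M₁ M₂ : Type*} [Fintype 𝒳] [Fintype 𝒴] [Fintype M₁] [Fintype M₂]
  {ρ : ℝ} {P : 𝒳 → 𝒴 → ℝ} {Q : 𝒳 → 𝒴 → M₁ × M₂ → ℝ}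

def bobGuessMoment (ρ : ℝ) (P : 𝒳 → 𝒴 → ℝ) (Q : 𝒳 → 𝒴 → M₁ × M₂ → ℝ)
    (G : 𝒳 → 𝒴 × M₁ × M₂ → ℕ) : ℝ :=
  ∑ x, ∑ y, ∑ m : M₁ × M₂, P x y * Q x y m * (G x (y, m) : ℝ) ^ ρ

theorem bobGuessMoment_nonneg (hP : ∀ x y, 0 ≤ P x y) (hQ : IsCondPMF Q)
    (G : 𝒳 → 𝒴 × M₁ × M₂ → ℕ) : 0 ≤ bobGuessMoment ρ P Q G :=
  sum_nonneg fun x _ => sum_nonneg fun y _ => sum_nonneg fun m _ =>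
    mul_nonneg (mul_nonneg (hP x y) ((hQ x y).1 m)) (rpow_nonneg (Nat.cast_nonneg _) _)

theorem le_bobGuessAmb {c : ℝ} (h : ∀ G, IsGuessing G → c ≤ bobGuessMoment ρ P Q G) :
    c ≤ bobGuessAmb ρ P Q :=
  le_csInf ⟨_, _, IsGuessing.equivFin _, rfl⟩ (by rintro _ ⟨G, hG, rfl⟩; exact h G hG)

theorem bobGuessAmb_le (hP : ∀ x y, 0 ≤ P x y) (hQ : IsCondPMF Q)
    {G : 𝒳 → 𝒴 × M₁ × M₂ → ℕ} (hG : IsGuessing G) :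
    bobGuessAmb ρ P Q ≤ bobGuessMoment ρ P Q G :=
  csInf_le ⟨0, by rintro _ ⟨G, -, rfl⟩; exact bobGuessMoment_nonneg hP hQ G⟩ ⟨G, hG, rfl⟩

theorem IsGuessing.bobGuessMoment_le (hρ : 0 ≤ ρ) (hP : IsPMF P) (hQ : IsCondPMF Q)
    {G : 𝒳 → 𝒴 × M₁ × M₂ → ℕ} (hG : IsGuessing G) :
    bobGuessMoment ρ P Q G ≤ (Fintype.card 𝒳 : ℝ) ^ ρ := by
  calc bobGuessMoment ρ P Q G
      ≤ ∑ x, ∑ y, ∑ m : M₁ × M₂, P x y * Q x y m * (Fintype.card 𝒳 : ℝ) ^ ρ := by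
        unfold bobGuessMoment
        gcongr with x _ y _ m _
        · exact mul_nonneg (hP.1 x y) ((hQ x y).1 m)
        · exact_mod_cast hG.le_card x (y, m)
    _ = (Fintype.card 𝒳 : ℝ) ^ ρ := by
        simp only [← sum_mul, ← mul_sum, (hQ _ _).2, mul_one, hP.2, one_mul]

theorem IsGuessing.rpow_sum_rpow_le_bobGuessMoment (hρ : 0 ≤ ρ) (hP : ∀ x y, 0 ≤ P x y)
    (hQ : IsCondPMF Q) {G : 𝒳 → 𝒴 × M₁ × M₂ → ℕ} (hG : IsGuessing G) :
    ∑ y, (∑ x, P x y ^ (1 / (1 + ρ))) ^ (1 + ρ) ≤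
      ((harmonic (Fintype.card 𝒳) : ℝ) * Fintype.card (M₁ × M₂)) ^ ρ *
        bobGuessMoment ρ P Q G := by
  calc ∑ y, (∑ x, P x y ^ (1 / (1 + ρ))) ^ (1 + ρ)
      ≤ ∑ y, (Fintype.card (M₁ × M₂) : ℝ) ^ ρ *
          ∑ m, (∑ x, (P x y * Q x y m) ^ (1 / (1 + ρ))) ^ (1 + ρ) :=
        sum_le_sum fun y _ => rpow_sum_rpow_le_card_rpow_mul_sum hρ (fun x => hP x y)
          (fun x => (hQ x y).1) (fun x => (hQ x y).2)
    _ ≤ ∑ y, (Fintype.card (M₁ × M₂) : ℝ) ^ ρ * ∑ m, (harmonic (Fintype.card 𝒳) : ℝ) ^ ρ *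
          ∑ x, P x y * Q x y m * (G x (y, m) : ℝ) ^ ρ := by
        gcongr with y _ m _
        exact hG.rpow_sum_rpow_le hρ (fun x => mul_nonneg (hP x y) ((hQ x y).1 m)) (y, m)
    _ = _ := by
        rw [mul_rpow (mod_cast harmonic_nonneg _) (Nat.cast_nonneg _), bobGuessMoment]
        simp only [mul_sum]
        conv_rhs => rw [sum_comm]; enter [2, y]; rw [sum_comm]
        exact sum_congr rfl fun _ _ => sum_congr rfl fun _ _ => sum_congr rfl fun _ _ => by ring

end GuessingMoment

theorem IsPMF.sum_rpow_sum_rpow_pos {𝒳 𝒴 : Type*} [Fintype 𝒳] [Fintype 𝒴] {P : 𝒳 → 𝒴 → ℝ}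
    (hP : IsPMF P) (α β : ℝ) : 0 < ∑ y, (∑ x, P x y ^ α) ^ β := by
  have hpos : 0 < ∑ x, ∑ y, P x y := hP.2 ▸ one_pos
  obtain ⟨x, -, hx⟩ := (sum_pos_iff_of_nonneg fun x _ => sum_nonneg fun y _ => hP.1 x y).1 hpos
  obtain ⟨y, -, hxy⟩ := (sum_pos_iff_of_nonneg fun y _ => hP.1 x y).1 hx
  refine (sum_pos_iff_of_nonneg fun y _ =>
    rpow_nonneg (sum_nonneg fun x _ => rpow_nonneg (hP.1 x y) _) _).2 ⟨y, mem_univ y, ?_⟩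
  exact rpow_pos_of_pos ((sum_pos_iff_of_nonneg fun x _ => rpow_nonneg (hP.1 x y) _).2
    ⟨x, mem_univ x, rpow_pos_of_pos hxy _⟩) _

theorem mul_condRenyi_eq_logb {𝒳 𝒴 : Type*} [Fintype 𝒳] [Fintype 𝒴] {ρ : ℝ} (hρ : 0 < ρ)
    (P : 𝒳 → 𝒴 → ℝ) :
    ρ * condRenyi (1 / (1 + ρ)) P = logb 2 (∑ y, (∑ x, P x y ^ (1 / (1 + ρ))) ^ (1 + ρ)) := by
  have hρ1 : 1 + ρ ≠ 0 := by positivity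
  have hcoef : 1 / (1 + ρ) / (1 - 1 / (1 + ρ)) = 1 / ρ := by
    field_simp [hρ.ne']
    ring
  rw [condRenyi, hcoef, one_div_one_div, ← mul_assoc, mul_one_div_cancel hρ.ne', one_mul]

section BobAmbiguity

variable {𝒳 𝒴 M₁ M₂ : Type*} [Fintype 𝒳] [Fintype 𝒴] [Fintype M₁] [Fintype M₂]
  {ρ : ℝ} {P : 𝒳 → 𝒴 → ℝ} {Q : 𝒳 → 𝒴 → M₁ × M₂ → ℝ}

theorem div_le_bobGuessAmb (hρ : 0 ≤ ρ) (hP : ∀ x y, 0 ≤ P x y) (hQ : IsCondPMF Q) :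
    (∑ y, (∑ x, P x y ^ (1 / (1 + ρ))) ^ (1 + ρ)) /
      ((harmonic (Fintype.card 𝒳) : ℝ) * Fintype.card (M₁ × M₂)) ^ ρ ≤ bobGuessAmb ρ P Q :=
  le_bobGuessAmb fun _ hG =>
    div_le_of_le_mul₀
      (rpow_nonneg (mul_nonneg (mod_cast harmonic_nonneg _) (Nat.cast_nonneg _)) _)
      (bobGuessMoment_nonneg hP hQ _)
      (by rw [mul_comm]; exact hG.rpow_sum_rpow_le_bobGuessMoment hρ hP hQ)

theorem bobGuessAmb_le_card_rpow (hρ : 0 ≤ ρ) (hP : IsPMF P) (hQ : IsCondPMF Q) :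
    bobGuessAmb ρ P Q ≤ (Fintype.card 𝒳 : ℝ) ^ ρ :=
  (bobGuessAmb_le hP.1 hQ (IsGuessing.equivFin _)).trans
    ((IsGuessing.equivFin _).bobGuessMoment_le hρ hP hQ)

variable [Nonempty 𝒳] [Nonempty M₁] [Nonempty M₂]

theorem bobGuessAmb_pos (hρ : 0 ≤ ρ) (hP : IsPMF P) (hQ : IsCondPMF Q) :
    0 < bobGuessAmb ρ P Q :=
  (div_pos (hP.sum_rpow_sum_rpow_pos _ _) (rpow_pos_of_pos (mul_pos
    (mod_cast harmonic_pos Fintype.card_ne_zero) (mod_cast Fintype.card_pos)) _)).trans_le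
    (div_le_bobGuessAmb hρ hP.1 hQ)

theorem logb_bobGuessAmb_le (hρ : 0 ≤ ρ) (hP : IsPMF P) (hQ : IsCondPMF Q) :
    logb 2 (bobGuessAmb ρ P Q) ≤ ρ * logb 2 (Fintype.card 𝒳) :=
  (logb_le_logb_of_le one_lt_two (bobGuessAmb_pos hρ hP hQ)
    (bobGuessAmb_le_card_rpow hρ hP hQ)).trans_eq
    (logb_rpow_eq_mul_logb_of_pos (mod_cast Fintype.card_pos))

theorem logb_bobGuessAmb_ge (hρ : 0 < ρ) (hP : IsPMF P) (hQ : IsCondPMF Q) :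
    ρ * condRenyi (1 / (1 + ρ)) P - ρ * logb 2 (harmonic (Fintype.card 𝒳)) -
      ρ * logb 2 (Fintype.card (M₁ × M₂)) ≤ logb 2 (bobGuessAmb ρ P Q) := by
  have hS := hP.sum_rpow_sum_rpow_pos (1 / (1 + ρ)) (1 + ρ)
  have hc : (0 : ℝ) < harmonic (Fintype.card 𝒳) := mod_cast harmonic_pos Fintype.card_ne_zero
  have hK : (0 : ℝ) < Fintype.card (M₁ × M₂) := mod_cast Fintype.card_pos
  have hcK := mul_pos hc hK
  calc _ = logb 2 ((∑ y, (∑ x, P x y ^ (1 / (1 + ρ))) ^ (1 + ρ)) /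
        ((harmonic (Fintype.card 𝒳) : ℝ) * Fintype.card (M₁ × M₂)) ^ ρ) := by
        rw [logb_div hS.ne' (rpow_pos_of_pos hcK _).ne', logb_rpow_eq_mul_logb_of_pos hcK,
          logb_mul hc.ne' hK.ne', mul_condRenyi_eq_logb hρ]
        ring
    _ ≤ logb 2 (bobGuessAmb ρ P Q) :=
        logb_le_logb_of_le one_lt_two (div_pos hS (rpow_pos_of_pos hcK _))
          (div_le_bobGuessAmb hρ.le hP.1 hQ)

end BobAmbiguity

theorem logb_harmonic_pow_le {N : ℕ} (hN : N ≠ 0) {n : ℕ} (hn : n ≠ 0) :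
    logb 2 (harmonic (N ^ n)) ≤ logb 2 (1 + log N) + logb 2 n := by
  have hlogN := log_natCast_nonneg N
  have hn1 : (1 : ℝ) ≤ n := mod_cast Nat.one_le_iff_ne_zero.2 hn
  rw [← logb_mul (by positivity) (by positivity)]
  refine logb_le_logb_of_le one_lt_two (mod_cast harmonic_pos (pow_ne_zero n hN)) ?_
  calc (harmonic (N ^ n) : ℝ) ≤ 1 + log (N ^ n : ℕ) := harmonic_le_one_add_log _
    _ = 1 + n * log N := by push_cast; rw [log_pow]
    _ ≤ (1 + log N) * n := by nlinarith

theorem logb_natCeil_two_rpow_le {a : ℝ} (ha : 0 ≤ a) : logb 2 ⌈(2 : ℝ) ^ a⌉₊ ≤ a + 1 := by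
  have h1 : (1 : ℝ) ≤ 2 ^ a := one_le_rpow one_le_two ha
  have hceil : (⌈(2 : ℝ) ^ a⌉₊ : ℝ) ≤ 2 ^ (a + 1) := by
    rw [rpow_add two_pos, rpow_one]
    linarith [Nat.ceil_lt_add_one (zero_le_one.trans h1)]
  calc logb 2 ⌈(2 : ℝ) ^ a⌉₊ ≤ logb 2 ((2 : ℝ) ^ (a + 1)) :=
        logb_le_logb_of_le one_lt_two (mod_cast Nat.ceil_pos.2 (by positivity)) hceil
    _ = a + 1 := logb_rpow two_pos (by norm_num)

theorem tendsto_const_add_logb_div_atTop (a : ℝ) :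
    Tendsto (fun n : ℕ => (a + logb 2 n) / n) atTop (𝓝 0) := by
  have hlog : Tendsto (fun n : ℕ => logb 2 n / n) atTop (𝓝 0) := by
    simpa [Function.comp_def] using
      (tendsto_pow_logb_div_mul_add_atTop 1 0 1 one_ne_zero).comp tendsto_natCast_atTop_atTop
  simpa [add_div] using (tendsto_const_div_atTop_nhds_zero_nat a).add hlog

instance (a : ℝ) : Nonempty (Fin ⌈(2 : ℝ) ^ a⌉₊) :=
  ⟨⟨0, Nat.ceil_pos.2 (rpow_pos_of_pos two_pos a)⟩⟩

theorem logb_bobGuessAmb_div_ge_of_rates {𝒳 𝒴 : Type*} [Fintype 𝒳] [Fintype 𝒴] [Nonempty 𝒳]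
    {ρ : ℝ} (hρ : 0 < ρ) {R₁ R₂ : ℝ} (hR₁ : 0 ≤ R₁) (hR₂ : 0 ≤ R₂) {n : ℕ} (hn : n ≠ 0)
    {P : (Fin n → 𝒳) → (Fin n → 𝒴) → ℝ} (hP : IsPMF P)
    {Q : (Fin n → 𝒳) → (Fin n → 𝒴) →
      Fin ⌈(2 : ℝ) ^ ((n : ℝ) * R₁)⌉₊ × Fin ⌈(2 : ℝ) ^ ((n : ℝ) * R₂)⌉₊ → ℝ}
    (hQ : IsCondPMF Q) :
    ρ * (condRenyi (1 / (1 + ρ)) P / n) - ρ * (R₁ + R₂) -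
        ρ * ((logb 2 (1 + log (Fintype.card 𝒳)) + 2 + logb 2 n) / n) ≤
      logb 2 (bobGuessAmb ρ P Q) / n := by
  have hbound := logb_bobGuessAmb_ge hρ hP hQ
  have hc := logb_harmonic_pow_le (Fintype.card_ne_zero (α := 𝒳)) hn
  have hK : logb 2 (Fintype.card (Fin ⌈(2 : ℝ) ^ ((n : ℝ) * R₁)⌉₊ ×
      Fin ⌈(2 : ℝ) ^ ((n : ℝ) * R₂)⌉₊)) ≤ n * R₁ + 1 + (n * R₂ + 1) := by
    rw [Fintype.card_prod, Fintype.card_fin, Fintype.card_fin, Nat.cast_mul,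
      logb_mul (mod_cast (Nat.ceil_pos.2 (by positivity)).ne')
        (mod_cast (Nat.ceil_pos.2 (by positivity)).ne')]
    exact add_le_add (logb_natCeil_two_rpow_le (by positivity))
      (logb_natCeil_two_rpow_le (by positivity))
  rw [Fintype.card_fun, Fintype.card_fin] at hbound
  have hn' : (0 : ℝ) < n := mod_cast Nat.pos_of_ne_zero hn
  rw [le_div_iff₀ hn']
  calc _ = ρ * condRenyi (1 / (1 + ρ)) P - ρ * (n * (R₁ + R₂)) -
        ρ * (logb 2 (1 + log (Fintype.card 𝒳)) + 2 + logb 2 n) := by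
        field_simp
    _ ≤ _ := by
        linarith [mul_le_mul_of_nonneg_left hc hρ.le, mul_le_mul_of_nonneg_left hK hρ.le]

theorem logb_bobGuessAmb_div_le {𝒳 𝒴 M₁ M₂ : Type*} [Fintype 𝒳] [Fintype 𝒴] [Fintype M₁]
    [Fintype M₂] [Nonempty 𝒳] [Nonempty M₁] [Nonempty M₂] {ρ : ℝ} (hρ : 0 ≤ ρ) {n : ℕ}
    (hn : n ≠ 0) {P : (Fin n → 𝒳) → 𝒴 → ℝ} (hP : IsPMF P)
    {Q : (Fin n → 𝒳) → 𝒴 → M₁ × M₂ → ℝ} (hQ : IsCondPMF Q) :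
    logb 2 (bobGuessAmb ρ P Q) / n ≤ ρ * logb 2 (Fintype.card 𝒳) := by
  rw [div_le_iff₀ (mod_cast Nat.pos_of_ne_zero hn)]
  have := logb_bobGuessAmb_le hρ hP hQ
  rw [Fintype.card_fun, Fintype.card_fin, Nat.cast_pow, logb_pow] at this
  exact this.trans_eq (by ring)

theorem asymptotic_infeasibility_general
    {𝒳 𝒴 : Type*} [Fintype 𝒳] [Fintype 𝒴] [Nonempty 𝒳]
    (ρ : ℝ) (hρ : 0 < ρ)
    (P : ∀ n : ℕ, (Fin n → 𝒳) → (Fin n → 𝒴) → ℝ) (hP : ∀ n, IsPMF (P n))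
    (H : ℝ)
    (hH : Filter.Tendsto (fun n => condRenyi (1 / (1 + ρ)) (P n) / n)
      Filter.atTop (nhds H))
    (R₁ R₂ : ℝ) (hR₁ : 0 < R₁) (hR₂ : 0 < R₂) (hsum : R₁ + R₂ < H)
    (Q : ∀ n : ℕ, (Fin n → 𝒳) → (Fin n → 𝒴) →
      Fin ⌈(2 : ℝ) ^ ((n : ℝ) * R₁)⌉₊ × Fin ⌈(2 : ℝ) ^ ((n : ℝ) * R₂)⌉₊ → ℝ)
    (hQ : ∀ n, IsCondPMF (Q n)) :
    ¬ Filter.Tendsto (fun n => bobGuessAmb ρ (P n) (Q n)) Filter.atTop (nhds 1) ∧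
    ρ * (H - R₁ - R₂) ≤
      Filter.liminf (fun n => Real.logb 2 (bobGuessAmb ρ (P n) (Q n)) / n)
        Filter.atTop ∧
    0 < ρ * (H - R₁ - R₂) := by
  have hgap : 0 < ρ * (H - R₁ - R₂) := mul_pos hρ (by linarith)
  set v : ℕ → ℝ := fun n => ρ * (condRenyi (1 / (1 + ρ)) (P n) / n) - ρ * (R₁ + R₂) -
    ρ * ((logb 2 (1 + log (Fintype.card 𝒳)) + 2 + logb 2 n) / n)
  have hv : Tendsto v atTop (𝓝 (ρ * (H - R₁ - R₂))) := by
    convert ((hH.const_mul ρ).sub_const (ρ * (R₁ + R₂))).sub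
      ((tendsto_const_add_logb_div_atTop _).const_mul ρ) using 2
    ring
  have hvu : ∀ᶠ n in atTop, v n ≤ logb 2 (bobGuessAmb ρ (P n) (Q n)) / n :=
    (eventually_ne_atTop 0).mono fun n hn =>
      logb_bobGuessAmb_div_ge_of_rates hρ hR₁.le hR₂.le hn (hP n) (hQ n)
  -- without an upper bound the real `liminf` would be a junk value
  have hu_le : ∀ᶠ n in atTop,
      logb 2 (bobGuessAmb ρ (P n) (Q n)) / n ≤ ρ * logb 2 (Fintype.card 𝒳) :=
    (eventually_ne_atTop 0).mono fun n hn => logb_bobGuessAmb_div_le hρ.le hn (hP n) (hQ n)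
  have hliminf := hv.liminf_eq ▸ liminf_le_liminf hvu hv.isBoundedUnder_ge
    (isBoundedUnder_of_eventually_le hu_le).isCoboundedUnder_ge
  refine ⟨fun hone => ?_, hliminf, hgap⟩
  have hzero : Tendsto (fun n => logb 2 (bobGuessAmb ρ (P n) (Q n)) / n) atTop (𝓝 0) := by
    simpa using ((continuousAt_logb one_ne_zero).tendsto.comp hone).div_atTop
      tendsto_natCast_atTop_atTop
  linarith [hzero.liminf_eq]

theorem asymptotic_infeasibility
    {𝒳 𝒴 : Type*} [Fintype 𝒳] [Fintype 𝒴] [Nonempty 𝒳] [Nonempty 𝒴]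
    (ρ : ℝ) (hρ : 0 < ρ)
    (P : ∀ n : ℕ, (Fin n → 𝒳) → (Fin n → 𝒴) → ℝ) (hP : ∀ n, IsPMF (P n))
    (H : ℝ)
    (hH : Filter.Tendsto (fun n => condRenyi (1 / (1 + ρ)) (P n) / n)
      Filter.atTop (nhds H))
    (R₁ R₂ : ℝ) (hR₁ : 0 < R₁) (hR₂ : 0 < R₂) (hsum : R₁ + R₂ < H)
    (Q : ∀ n : ℕ, (Fin n → 𝒳) → (Fin n → 𝒴) →
      Fin ⌈(2 : ℝ) ^ ((n : ℝ) * R₁)⌉₊ × Fin ⌈(2 : ℝ) ^ ((n : ℝ) * R₂)⌉₊ → ℝ)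
    (hQ : ∀ n, IsCondPMF (Q n)) :
    ¬ Filter.Tendsto (fun n => bobGuessAmb ρ (P n) (Q n)) Filter.atTop (nhds 1) ∧
    ρ * (H - R₁ - R₂) ≤
      Filter.liminf (fun n => Real.logb 2 (bobGuessAmb ρ (P n) (Q n)) / n)
        Filter.atTop ∧
    0 < ρ * (H - R₁ - R₂) :=
  asymptotic_infeasibility_general ρ hρ P hP H hH R₁ R₂ hR₁ hR₂ hsum Q hQ
end
end
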